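/- arXiv:1410.6734 — 7 statements merged into one kernel-verified Lean document; each statement's English description precedes it below -/
import Mathlib

section
/- Let e ∈ ℝ^n with ‖e‖ = √n, and let 0 < α < √n. Define the circular cone K_e(α) := {x ∈ ℝ^n : eᵀx ≥ α‖x‖}. Then the dual cone of K_e(α) with respect to the standard inner product equals K_e(√(n − α²)), i.e., {s : xᵀs ≥ 0 for all x ∈ K_e(α)} = {s : eᵀs ≥ √(n − α²)·‖s‖}. -/
open RealInnerProductSpace

/-!
Decompose along the unit axis `u = e / ‖e‖`: with `a = ⟪u, x⟫`, `b = ⟪u, s⟫` and `x⊥`, `s⊥` the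
components orthogonal to `u`, `⟪x, s⟫ = a b + ⟪x⊥, s⊥⟫` and `‖x‖² = a² + ‖x⊥‖²`. Normalise the
apertures to `c = α / ‖e‖`, `σ = β / ‖e‖`, so that `c² + σ² = 1`. If `a ≥ c ‖x‖` and `b ≥ σ ‖s‖`,
then `‖x⊥‖ ≤ σ ‖x‖` and `‖s⊥‖ ≤ c ‖s‖`, so `⟪x, s⟫ ≥ a b - ‖x⊥‖ ‖s⊥‖ ≥ 0`. Conversely, testing a
dual vector `s` against the unit vector `c u - σ s⊥ / ‖s⊥‖` of the cone gives `σ ‖s⊥‖ ≤ c b`,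
whence `σ ‖s‖ ≤ b`.
-/

section CircularCone

variable {E : Type*} [NormedAddCommGroup E] [InnerProductSpace ℝ E]

def circularCone (e : E) (α : ℝ) : Set E := {x | α * ‖x‖ ≤ ⟪e, x⟫}

theorem circularCone_smul {u : E} {r : ℝ} (hr : 0 < r) (c : ℝ) :
    circularCone (r • u) (r * c) = circularCone u c := by
  ext x
  simp only [circularCone, Set.mem_ofPred_eq, real_inner_smul_left, mul_assoc,
    mul_le_mul_iff_right₀ hr]

section UnitAxis

variable {u : E} (hu : ‖u‖ = 1)
include hu

theorem inner_eq_inner_mul_inner_add_inner_sub_smul (x s : E) :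
    ⟪x, s⟫ = ⟪u, x⟫ * ⟪u, s⟫ + ⟪x - ⟪u, x⟫ • u, s - ⟪u, s⟫ • u⟫ := by
  have huu : ⟪u, u⟫ = 1 := by rw [real_inner_self_eq_norm_sq, hu, one_pow]
  simp only [inner_sub_left, inner_sub_right, real_inner_smul_left, real_inner_smul_right, huu,
    real_inner_comm x u]
  ring

theorem norm_sq_eq_inner_sq_add_norm_sub_smul_sq (x : E) :
    ‖x‖ ^ 2 = ⟪u, x⟫ ^ 2 + ‖x - ⟪u, x⟫ • u‖ ^ 2 := by
  simpa only [real_inner_self_eq_norm_sq, sq] using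
    inner_eq_inner_mul_inner_add_inner_sub_smul hu x x

theorem inner_sub_smul_right_eq_zero (x : E) : ⟪u, x - ⟪u, x⟫ • u⟫ = 0 := by
  rw [inner_sub_right, real_inner_smul_right, real_inner_self_eq_norm_sq, hu]
  ring

variable {c σ : ℝ} (hc : 0 ≤ c) (hσ : 0 ≤ σ) (hcσ : c ^ 2 + σ ^ 2 = 1)
include hc hσ hcσ

theorem norm_sub_smul_le_of_mem_circularCone {x : E} (hx : x ∈ circularCone u c) :
    ‖x - ⟪u, x⟫ • u‖ ≤ σ * ‖x‖ := by
  have hdecomp := norm_sq_eq_inner_sq_add_norm_sub_smul_sq hu x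
  have hcx : 0 ≤ c * ‖x‖ := by positivity
  have hsq : (c * ‖x‖) ^ 2 ≤ ⟪u, x⟫ ^ 2 := pow_le_pow_left₀ hcx hx 2
  refine le_of_sq_le_sq ?_ (by positivity)
  nlinarith

theorem circularCone_subset_innerDual [CompleteSpace E] :
    circularCone u σ ⊆ (ProperCone.innerDual (circularCone u c) : Set E) := by
  intro s hs
  rw [SetLike.mem_coe, ProperCone.mem_innerDual]
  intro x hx
  have hx_perp := norm_sub_smul_le_of_mem_circularCone hu hc hσ hcσ hx
  have hs_perp := norm_sub_smul_le_of_mem_circularCone hu hσ hc (by linarith) hs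
  have hcs := neg_le_of_abs_le (abs_real_inner_le_norm (x - ⟪u, x⟫ • u) (s - ⟪u, s⟫ • u))
  have hprod : ‖x - ⟪u, x⟫ • u‖ * ‖s - ⟪u, s⟫ • u‖ ≤ (c * ‖x‖) * (σ * ‖s‖) :=
    calc ‖x - ⟪u, x⟫ • u‖ * ‖s - ⟪u, s⟫ • u‖ ≤ (σ * ‖x‖) * (c * ‖s‖) :=
          mul_le_mul hx_perp hs_perp (norm_nonneg _) (by positivity)
      _ = (c * ‖x‖) * (σ * ‖s‖) := by ring
  have hcone : (c * ‖x‖) * (σ * ‖s‖) ≤ ⟪u, x⟫ * ⟪u, s⟫ :=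
    mul_le_mul hx hs (by positivity) (le_trans (by positivity) hx)
  rw [inner_eq_inner_mul_inner_add_inner_sub_smul hu x s]
  linarith

theorem sub_smul_mem_circularCone {v : E} (hv : ‖v‖ = 1) (huv : ⟪u, v⟫ = 0) :
    c • u - σ • v ∈ circularCone u c := by
  have hnorm : ‖c • u - σ • v‖ = 1 := by
    rw [← pow_eq_one_iff_of_nonneg (norm_nonneg _) two_ne_zero, norm_sub_sq_real,
      norm_smul, norm_smul, real_inner_smul_left, real_inner_smul_right, huv, hu, hv,
      Real.norm_of_nonneg hc, Real.norm_of_nonneg hσ]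
    linear_combination hcσ
  simp only [circularCone, Set.mem_ofPred_eq, hnorm, inner_sub_right, real_inner_smul_right,
    real_inner_self_eq_norm_sq, hu, huv]
  norm_num

theorem innerDual_subset_circularCone [CompleteSpace E] :
    (ProperCone.innerDual (circularCone u c) : Set E) ⊆ circularCone u σ := by
  intro s hs
  rw [SetLike.mem_coe, ProperCone.mem_innerDual] at hs
  set s' := s - ⟪u, s⟫ • u
  have hb : 0 ≤ ⟪u, s⟫ := hs (x := u) <| by
    simp only [circularCone, Set.mem_ofPred_eq, hu, real_inner_self_eq_norm_sq]
    nlinarith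
  have hperp : σ * ‖s'‖ ≤ c * ⟪u, s⟫ := by
    rcases eq_or_ne s' 0 with hs' | hs'
    · rw [hs', norm_zero, mul_zero]
      positivity
    set v := ‖s'‖⁻¹ • s'
    have hv : ‖v‖ = 1 := norm_smul_inv_norm hs'
    have huv : ⟪u, v⟫ = 0 := by
      rw [real_inner_smul_right, inner_sub_smul_right_eq_zero hu, mul_zero]
    have hvs : ⟪v, s⟫ = ‖s'‖ := by
      have hus' : ⟪u, s'⟫ = 0 := inner_sub_smul_right_eq_zero hu s
      have : ⟪s', s⟫ = ‖s'‖ ^ 2 := by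
        rw [inner_eq_inner_mul_inner_add_inner_sub_smul hu s' s, hus', zero_mul, zero_smul,
          sub_zero, zero_add, real_inner_self_eq_norm_sq]
      rw [real_inner_smul_left, this, sq, ← mul_assoc, inv_mul_cancel₀ (norm_ne_zero_iff.2 hs'),
        one_mul]
    have hgen := sub_smul_mem_circularCone hu hc hσ hcσ hv huv
    have := hs hgen
    rw [inner_sub_left, real_inner_smul_left, real_inner_smul_left, hvs] at this
    linarith
  have hdecomp := norm_sq_eq_inner_sq_add_norm_sub_smul_sq hu s
  show σ * ‖s‖ ≤ ⟪u, s⟫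
  refine le_of_sq_le_sq ?_ hb
  have hperp_sq : (σ * ‖s'‖) ^ 2 ≤ (c * ⟪u, s⟫) ^ 2 :=
    pow_le_pow_left₀ (by positivity) hperp 2
  nlinarith

theorem innerDual_circularCone [CompleteSpace E] :
    (ProperCone.innerDual (circularCone u c) : Set E) = circularCone u σ :=
  (innerDual_subset_circularCone hu hc hσ hcσ).antisymm
    (circularCone_subset_innerDual hu hc hσ hcσ)

end UnitAxis

theorem innerDual_circularCone_of_sq_add_sq [CompleteSpace E] {e : E} (he : e ≠ 0) {α β : ℝ}
    (hα : 0 ≤ α) (hβ : 0 ≤ β) (hαβ : α ^ 2 + β ^ 2 = ‖e‖ ^ 2) :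
    (ProperCone.innerDual (circularCone e α) : Set E) = circularCone e β := by
  have hr : 0 < ‖e‖ := norm_pos_iff.2 he
  have hcσ : (α / ‖e‖) ^ 2 + (β / ‖e‖) ^ 2 = 1 := by
    rw [div_pow, div_pow, ← add_div, hαβ, div_self (pow_pos hr 2).ne']
  have hu : ‖‖e‖⁻¹ • e‖ = 1 := by rw [norm_smul, norm_inv, norm_norm, inv_mul_cancel₀ hr.ne']
  have hcone : ∀ γ, circularCone e γ = circularCone (‖e‖⁻¹ • e) (γ / ‖e‖) := fun γ => by
    rw [← circularCone_smul hr (γ / ‖e‖), smul_inv_smul₀ hr.ne', mul_div_cancel₀ _ hr.ne']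
  rw [hcone, hcone]
  exact innerDual_circularCone hu (div_nonneg hα hr.le) (div_nonneg hβ hr.le) hcσ

end CircularCone

theorem stmt_1 (n : ℕ) (e : EuclideanSpace ℝ (Fin n))
    (he : ‖e‖ = Real.sqrt n) (α : ℝ) (hα0 : 0 < α) (hαn : α < Real.sqrt n) :
    {s : EuclideanSpace ℝ (Fin n) |
        ∀ x ∈ {x : EuclideanSpace ℝ (Fin n) | (inner ℝ e x : ℝ) ≥ α * ‖x‖},
          (inner ℝ x s : ℝ) ≥ 0} =
      {s : EuclideanSpace ℝ (Fin n) |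
        (inner ℝ e s : ℝ) ≥ Real.sqrt ((n : ℝ) - α ^ 2) * ‖s‖} := by
  have he0 : e ≠ 0 := norm_pos_iff.1 (he ▸ hα0.trans hαn)
  have hαn' : α ^ 2 < n := (Real.lt_sqrt hα0.le).1 hαn
  have hsq : α ^ 2 + Real.sqrt ((n : ℝ) - α ^ 2) ^ 2 = ‖e‖ ^ 2 := by
    rw [Real.sq_sqrt (by linarith), he, Real.sq_sqrt n.cast_nonneg]
    ring
  exact innerDual_circularCone_of_sq_add_sq he0 hα0.le (Real.sqrt_nonneg _) hsq
end

section
/- Let 0 < α < √n, let e ∈ ℝ^n with ‖e‖ = √n, let L ⊆ ℝ^n be a subspace, and let x̄ ≠ 0 be a point with x̄ − e ∈ L and eᵀx̄ = α‖x̄‖. Let T := {v ∈ L : eᵀv = (α/‖x̄‖)·x̄ᵀv} and let θ be the angle between x̄ and its orthogonal projection onto T. Then the orthogonal projection of e onto L^⊥ satisfies ‖P_{L^⊥}(e)‖² = (n − α²)·‖x̄‖²·sin²θ / (n − α² + (‖x̄‖ − α)²·sin²θ). -/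
/-!
Put `w = e - (α / ‖x̄‖) • x̄`. Then `⟪w, x̄⟫ = 0`, `‖w‖² = n - α²` and `T = L ⊓ wᗮ = L ⊓ (P_L w)ᗮ`,
so `x̄ - u` splits orthogonally into `q := P_{Lᗮ} x̄ = P_{Lᗮ} e` and the projection of `x̄` onto the
line `ℝ ∙ P_L w`; this gives `‖x̄‖² sin²θ ‖P_L w‖² = ‖q‖² ‖P_L w‖² + ⟪P_L w, x̄⟫²`. Since
`P_{Lᗮ} w = (1 - α / ‖x̄‖) • q`, both `‖P_L w‖²` and `⟪P_L w, x̄⟫` are explicit in `‖q‖²`, and the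
identity becomes linear in `‖q‖²`.
-/

open scoped InnerProductSpace

namespace Submodule

variable {𝕜 E : Type*} [RCLike 𝕜] [NormedAddCommGroup E] [InnerProductSpace 𝕜 E]
  {K : Submodule 𝕜 E} [K.HasOrthogonalProjection]

theorem starProjection_inf_orthogonal_of_le {K' : Submodule 𝕜 E} [K'.HasOrthogonalProjection]
    [(K ⊓ K'ᗮ).HasOrthogonalProjection] (h : K' ≤ K) (x : E) :
    (K ⊓ K'ᗮ).starProjection x = K.starProjection x - K'.starProjection x := by
  refine eq_starProjection_of_mem_orthogonal' (z := (x - K.starProjection x) + K'.starProjection x)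
    ⟨K.sub_mem (K.starProjection_apply_mem x) (h (K'.starProjection_apply_mem x)), ?_⟩ ?_ (by abel)
  · have hK' : K'.starProjection (K.starProjection x) = K'.starProjection x := by
      simpa using congr($(starProjection_comp_starProjection_of_le h) x)
    simpa [hK'] using K'.sub_starProjection_mem_orthogonal (K.starProjection x)
  · exact add_mem (orthogonal_le inf_le_left (K.sub_starProjection_mem_orthogonal x))
      (orthogonal_le inf_le_right (K'.le_orthogonal_orthogonal (K'.starProjection_apply_mem x)))

theorem starProjection_orthogonal_eq_of_sub_mem {x e : E} (h : x - e ∈ K) :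
    Kᗮ.starProjection x = Kᗮ.starProjection e := by
  rwa [← sub_eq_zero, ← map_sub, starProjection_apply_eq_zero_iff, orthogonal_orthogonal]

theorem inf_orthogonal_span_singleton_starProjection (w : E) :
    K ⊓ (𝕜 ∙ K.starProjection w)ᗮ = K ⊓ (𝕜 ∙ w)ᗮ := by
  ext v
  simp only [mem_inf, mem_orthogonal_singleton_iff_inner_right, and_congr_right_iff]
  intro hv
  rw [inner_starProjection_left_eq_right, starProjection_eq_self_iff.mpr hv]

theorem norm_starProjection_span_singleton_sq_mul (v x : E) :
    ‖(𝕜 ∙ v).starProjection x‖ ^ 2 * ‖v‖ ^ 2 = ‖⟪v, x⟫_𝕜‖ ^ 2 := by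
  rcases eq_or_ne v 0 with rfl | hv
  · simp
  have hv' : ‖v‖ ≠ 0 := norm_ne_zero_iff.mpr hv
  rw [starProjection_singleton, norm_smul, norm_div]
  simp only [RCLike.norm_ofReal, abs_pow, abs_norm]
  field_simp

theorem norm_sub_starProjection_inf_orthogonal_span_singleton_sq_mul {v : E} (hv : v ∈ K)
    [(K ⊓ (𝕜 ∙ v)ᗮ).HasOrthogonalProjection] (x : E) :
    ‖x - (K ⊓ (𝕜 ∙ v)ᗮ).starProjection x‖ ^ 2 * ‖v‖ ^ 2 =
      ‖x - K.starProjection x‖ ^ 2 * ‖v‖ ^ 2 + ‖⟪v, x⟫_𝕜‖ ^ 2 := by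
  have hsplit : x - (K ⊓ (𝕜 ∙ v)ᗮ).starProjection x =
      (x - K.starProjection x) + (𝕜 ∙ v).starProjection x := by
    rw [starProjection_inf_orthogonal_of_le ((span_singleton_le_iff_mem v K).mpr hv)]
    abel
  have hortho : ⟪x - K.starProjection x, (𝕜 ∙ v).starProjection x⟫_𝕜 = 0 :=
    K.inner_left_of_mem_orthogonal
      ((span_singleton_le_iff_mem v K).mpr hv ((𝕜 ∙ v).starProjection_apply_mem x))
      (K.sub_starProjection_mem_orthogonal x)
  have hpyth := norm_add_sq_eq_norm_sq_add_norm_sq_of_inner_eq_zero _ _ hortho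
  rw [hsplit, ← norm_starProjection_span_singleton_sq_mul v x]
  simp only [sq] at hpyth ⊢
  rw [hpyth]
  ring

section Real

variable {F : Type*} [NormedAddCommGroup F] [InnerProductSpace ℝ F]
  {K : Submodule ℝ F} [K.HasOrthogonalProjection]

theorem real_inner_starProjection_self (x : F) :
    ⟪K.starProjection x, x⟫_ℝ = ‖K.starProjection x‖ ^ 2 := by
  simpa using K.re_inner_starProjection_eq_normSq x

/-- When `K.starProjection x = 0` both sides are `1`, the left one because `a / 0 = 0`. -/
theorem one_sub_inner_starProjection_sq_div_eq {x : F} (hx : x ≠ 0) :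
    1 - ⟪x, K.starProjection x⟫_ℝ ^ 2 / (‖x‖ ^ 2 * ‖K.starProjection x‖ ^ 2) =
      ‖x - K.starProjection x‖ ^ 2 / ‖x‖ ^ 2 := by
  have hx' : ‖x‖ ≠ 0 := norm_ne_zero_iff.mpr hx
  have hpyth : ‖x‖ ^ 2 = ‖K.starProjection x‖ ^ 2 + ‖x - K.starProjection x‖ ^ 2 := by
    simpa using K.norm_sq_eq_add_norm_sq_starProjection x
  rw [real_inner_comm, real_inner_starProjection_self]
  rcases eq_or_ne ‖K.starProjection x‖ 0 with h0 | h0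
  · rw [h0] at hpyth ⊢
    field_simp
    linarith
  · field_simp
    linear_combination hpyth

theorem norm_sub_starProjection_inf_orthogonal_sq_mul_eq {e x : F} {a : ℝ} (hxe : x - e ∈ K)
    (hwx : ⟪e - a • x, x⟫_ℝ = 0)
    [(K ⊓ (ℝ ∙ K.starProjection (e - a • x))ᗮ).HasOrthogonalProjection] :
    ‖x - (K ⊓ (ℝ ∙ K.starProjection (e - a • x))ᗮ).starProjection x‖ ^ 2 *
        (‖e - a • x‖ ^ 2 - (1 - a) ^ 2 * ‖Kᗮ.starProjection e‖ ^ 2) =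
      ‖Kᗮ.starProjection e‖ ^ 2 * ‖e - a • x‖ ^ 2 := by
  set w := e - a • x
  set q := Kᗮ.starProjection e
  have hqx : Kᗮ.starProjection x = q := starProjection_orthogonal_eq_of_sub_mem hxe
  have hwq : Kᗮ.starProjection w = (1 - a) • q := by
    rw [map_sub, map_smul, hqx]
    module
  have hv : K.starProjection w = w - (1 - a) • q := by
    rw [← hwq, starProjection_orthogonal_val]
    abel
  have hv2 : ‖K.starProjection w‖ ^ 2 = ‖w‖ ^ 2 - (1 - a) ^ 2 * ‖q‖ ^ 2 := by
    have := K.norm_sq_eq_add_norm_sq_starProjection w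
    rw [hwq, norm_smul, Real.norm_eq_abs, mul_pow, sq_abs] at this
    linarith
  have hvx : ⟪K.starProjection w, x⟫_ℝ = -((1 - a) * ‖q‖ ^ 2) := by
    rw [hv, inner_sub_left, hwx, real_inner_smul_left, ← hqx, real_inner_starProjection_self]
    ring
  have hkey := norm_sub_starProjection_inf_orthogonal_span_singleton_sq_mul
    (K.starProjection_apply_mem w) x
  rw [← K.starProjection_orthogonal_val, hqx, hvx, hv2, Real.norm_eq_abs, sq_abs] at hkey
  linear_combination hkey

end Real

end Submodule

section

variable {F : Type*} [NormedAddCommGroup F] [InnerProductSpace ℝ F] {e x : F} {α : ℝ}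

theorem inner_sub_div_norm_smul_self_eq_zero (hx : x ≠ 0) (h : ⟪e, x⟫_ℝ = α * ‖x‖) :
    ⟪e - (α / ‖x‖) • x, x⟫_ℝ = 0 := by
  have hx' : ‖x‖ ≠ 0 := norm_ne_zero_iff.mpr hx
  rw [inner_sub_left, real_inner_smul_left, h, real_inner_self_eq_norm_sq]
  field_simp
  ring

theorem norm_sub_div_norm_smul_sq (hx : x ≠ 0) (h : ⟪e, x⟫_ℝ = α * ‖x‖) :
    ‖e - (α / ‖x‖) • x‖ ^ 2 = ‖e‖ ^ 2 - α ^ 2 := by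
  have hx' : ‖x‖ ≠ 0 := norm_ne_zero_iff.mpr hx
  rw [norm_sub_sq_real, real_inner_smul_right, h, norm_smul, Real.norm_eq_abs, mul_pow, sq_abs]
  field_simp
  ring

end

open Classical in
theorem stmt_3 (n : ℕ) (e xbar : EuclideanSpace ℝ (Fin n))
    (he : ‖e‖ = Real.sqrt n) (α : ℝ) (hα0 : 0 < α) (hαn : α < Real.sqrt n)
    (L : Submodule ℝ (EuclideanSpace ℝ (Fin n)))
    (hx : xbar ≠ 0) (hxL : xbar - e ∈ L)
    (hxbdry : (inner ℝ e xbar : ℝ) = α * ‖xbar‖)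
    (T : Submodule ℝ (EuclideanSpace ℝ (Fin n)))
    (hT : T = L ⊓ LinearMap.ker
      ((innerSL ℝ e : EuclideanSpace ℝ (Fin n) →L[ℝ] ℝ) -
        (α / ‖xbar‖) • (innerSL ℝ xbar : EuclideanSpace ℝ (Fin n) →L[ℝ] ℝ)).toLinearMap)
    (u : EuclideanSpace ℝ (Fin n)) (hu : u = (T.orthogonalProjectionOnto xbar : EuclideanSpace ℝ (Fin n)))
    (sin2 : ℝ)
    (hsin2 : sin2 = if u = 0 then 1 else
      1 - ((inner ℝ xbar u : ℝ)) ^ 2 / (‖xbar‖ ^ 2 * ‖u‖ ^ 2)) :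
    ‖(Lᗮ.orthogonalProjectionOnto e : EuclideanSpace ℝ (Fin n))‖ ^ 2 =
      ((n : ℝ) - α ^ 2) * ‖xbar‖ ^ 2 * sin2 /
        ((n : ℝ) - α ^ 2 + (‖xbar‖ - α) ^ 2 * sin2) := by
  have hR : 0 < ‖xbar‖ := norm_pos_iff.mpr hx
  have hN : 0 < (n : ℝ) - α ^ 2 := by
    nlinarith [Real.sq_sqrt (Nat.cast_nonneg (α := ℝ) n)]
  set w := e - (α / ‖xbar‖) • xbar with hw
  have hw2 : ‖w‖ ^ 2 = n - α ^ 2 := by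
    rw [hw, norm_sub_div_norm_smul_sq hx hxbdry, he, Real.sq_sqrt (Nat.cast_nonneg n)]
  have hTw : T = L ⊓ (ℝ ∙ L.starProjection w)ᗮ := by
    rw [Submodule.inf_orthogonal_span_singleton_starProjection, hT]
    ext z
    simp [Submodule.mem_orthogonal_singleton_iff_inner_right, hw, inner_sub_left,
      real_inner_smul_left, sub_eq_zero]
  subst hTw
  rw [← Submodule.starProjection_apply] at hu ⊢
  have hsin2' : sin2 = ‖xbar - u‖ ^ 2 / ‖xbar‖ ^ 2 := by
    rw [hsin2, hu, ← Submodule.one_sub_inner_starProjection_sq_div_eq hx]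
    split_ifs with h
    · simp [h]
    · rfl
  have hs0 : 0 ≤ sin2 := hsin2' ▸ by positivity
  have hs : ‖xbar - u‖ ^ 2 = ‖xbar‖ ^ 2 * sin2 := by
    rw [hsin2']
    field_simp
  have hkey := Submodule.norm_sub_starProjection_inf_orthogonal_sq_mul_eq hxL
    (inner_sub_div_norm_smul_self_eq_zero hx hxbdry)
  rw [← hu, hs, hw2] at hkey
  have hden : 0 < (n : ℝ) - α ^ 2 + (‖xbar‖ - α) ^ 2 * sin2 := by
    have := mul_nonneg (sq_nonneg (‖xbar‖ - α)) hs0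
    linarith
  have hcR : ‖xbar‖ - α = (1 - α / ‖xbar‖) * ‖xbar‖ := by field_simp
  rw [eq_div_iff hden.ne', hcR]
  linear_combination -hkey
end

section
/- Let 0 < β ≤ α < √n and e ∈ ℝ^n with ‖e‖ = √n. For every s̄ ∈ K_e(√(n−β²)) (equivalently, s̄ ∈ K_e(β)*), the cone K_e(√(n−α²)) contains the closed Euclidean ball of radius r = (1/n)·‖s̄‖·(α·√(n−β²) − β·√(n−α²)) centered at s̄. -/
/-!
Write `y = t u + y⊥` with `t = ⟪u, y⟫` for the unit vector `u = e / ‖e‖`, and put `c = cos θ`,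
`s = sin θ` for the half-angle `θ` of the target cone. The margin `s t - c ‖y⊥‖` is nonnegative
exactly on that cone, it is superadditive because `‖·⊥‖` is subadditive, and by Cauchy–Schwarz it
is at least `-‖d‖` at any vector `d`. At a point `x₀` of the narrower cone of half-angle `φ` it is at
least `‖x₀‖ sin (θ - φ)`, so it stays nonnegative on the ball of that radius around `x₀`; with
`sin θ = α / √n`, `sin φ = β / √n` this radius is the one in the theorem.
-/

open RealInnerProductSpace Metric

section CircularCone

variable {E : Type*} [NormedAddCommGroup E] [InnerProductSpace ℝ E] {u : E} {c s : ℝ}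

lemma norm_sq_eq_inner_sq_add_norm_sub_sq (hu : ‖u‖ = 1) (y : E) :
    ‖y‖ ^ 2 = ⟪u, y⟫ ^ 2 + ‖y - ⟪u, y⟫ • u‖ ^ 2 := by
  rw [norm_sub_sq_real, norm_smul, real_inner_smul_right, hu, Real.norm_eq_abs, mul_one, sq_abs,
    real_inner_comm]
  ring

/-- For `‖u‖ = 1`, `c = cos θ` and `s = sin θ` this is `‖y‖ sin (θ - ∠(u, y))`. -/
noncomputable def coneMargin (u : E) (c s : ℝ) (y : E) : ℝ :=
  s * ⟪u, y⟫ - c * ‖y - ⟪u, y⟫ • u‖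

lemma add_le_coneMargin_add (hc : 0 ≤ c) (y z : E) :
    coneMargin u c s y + coneMargin u c s z ≤ coneMargin u c s (y + z) := by
  have hperp : y + z - ⟪u, y + z⟫ • u = (y - ⟪u, y⟫ • u) + (z - ⟪u, z⟫ • u) := by
    rw [inner_add_right, add_smul]; abel
  unfold coneMargin
  rw [hperp, inner_add_right]
  linarith [mul_le_mul_of_nonneg_left (norm_add_le (y - ⟪u, y⟫ • u) (z - ⟪u, z⟫ • u)) hc]

lemma neg_norm_le_coneMargin (hu : ‖u‖ = 1) (hcs : c ^ 2 + s ^ 2 = 1) (y : E) :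
    -‖y‖ ≤ coneMargin u c s y := by
  have hy := norm_sq_eq_inner_sq_add_norm_sub_sq hu y
  set t := ⟪u, y⟫
  set w := ‖y - t • u‖
  have hsq : (s * t - c * w) ^ 2 ≤ ‖y‖ ^ 2 := by
    -- `(s t - c w)² + (c t + s w)² = (c² + s²) (t² + w²)`
    nlinarith [sq_nonneg (c * t + s * w)]
  exact (abs_le_of_sq_le_sq' hsq (norm_nonneg y)).1

lemma mul_norm_le_coneMargin_of_mul_norm_le_inner (hu : ‖u‖ = 1) {c₁ s₁ c₂ s₂ : ℝ}
    (h₁ : c₁ ^ 2 + s₁ ^ 2 = 1) (hc₁ : 0 ≤ c₁) (hs₁ : 0 ≤ s₁) (hc₂ : 0 ≤ c₂) (hs₂ : 0 ≤ s₂)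
    {y : E} (hy : c₁ * ‖y‖ ≤ ⟪u, y⟫) :
    ‖y‖ * (s₂ * c₁ - c₂ * s₁) ≤ coneMargin u c₂ s₂ y := by
  have hpyth := norm_sq_eq_inner_sq_add_norm_sub_sq hu y
  set t := ⟪u, y⟫
  set w := ‖y - t • u‖
  have hw : w ≤ s₁ * ‖y‖ := by
    have ht : (c₁ * ‖y‖) ^ 2 ≤ t ^ 2 := pow_le_pow_left₀ (by positivity) hy 2
    exact abs_le_of_sq_le_sq' (by nlinarith) (by positivity) |>.2
  unfold coneMargin
  linarith [mul_le_mul_of_nonneg_left hy hs₂, mul_le_mul_of_nonneg_left hw hc₂]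

lemma mul_norm_le_inner_of_coneMargin_nonneg (hu : ‖u‖ = 1) (hcs : c ^ 2 + s ^ 2 = 1)
    (hc : 0 ≤ c) (hs : 0 < s) {y : E} (hy : 0 ≤ coneMargin u c s y) :
    c * ‖y‖ ≤ ⟪u, y⟫ := by
  have hpyth := norm_sq_eq_inner_sq_add_norm_sub_sq hu y
  unfold coneMargin at hy
  set t := ⟪u, y⟫
  set w := ‖y - t • u‖
  have hcw : 0 ≤ c * w := by positivity
  have ht : 0 ≤ t := nonneg_of_mul_nonneg_right (by linarith) hs
  have hsq : (c * w) ^ 2 ≤ (s * t) ^ 2 := pow_le_pow_left₀ hcw (by linarith) 2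
  exact abs_le_of_sq_le_sq' (by nlinarith) ht |>.2

theorem closedBall_subset_setOf_mul_norm_le_inner (hu : ‖u‖ = 1) {c₁ s₁ c₂ s₂ : ℝ}
    (h₁ : c₁ ^ 2 + s₁ ^ 2 = 1) (h₂ : c₂ ^ 2 + s₂ ^ 2 = 1) (hc₁ : 0 ≤ c₁) (hs₁ : 0 ≤ s₁)
    (hc₂ : 0 ≤ c₂) (hs₂ : 0 < s₂) {x₀ : E} (hx₀ : c₁ * ‖x₀‖ ≤ ⟪u, x₀⟫) :
    closedBall x₀ (‖x₀‖ * (s₂ * c₁ - c₂ * s₁)) ⊆ {x | c₂ * ‖x‖ ≤ ⟪u, x⟫} := by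
  intro x hx
  have hd : ‖x - x₀‖ ≤ ‖x₀‖ * (s₂ * c₁ - c₂ * s₁) := mem_closedBall_iff_norm.1 hx
  refine mul_norm_le_inner_of_coneMargin_nonneg hu h₂ hc₂ hs₂ ?_
  calc 0 ≤ coneMargin u c₂ s₂ x₀ + coneMargin u c₂ s₂ (x - x₀) := by
        linarith [mul_norm_le_coneMargin_of_mul_norm_le_inner hu h₁ hc₁ hs₁ hc₂ hs₂.le hx₀,
          neg_norm_le_coneMargin hu h₂ (x - x₀)]
    _ ≤ coneMargin u c₂ s₂ (x₀ + (x - x₀)) := add_le_coneMargin_add hc₂ _ _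
    _ = coneMargin u c₂ s₂ x := by rw [add_sub_cancel]

theorem closedBall_subset_setOf_mul_norm_le_inner_of_norm_eq {e : E} {N : ℝ} (he : ‖e‖ = N)
    (hN : 0 < N) {a₁ b₁ a₂ b₂ : ℝ} (h₁ : a₁ ^ 2 + b₁ ^ 2 = N ^ 2) (h₂ : a₂ ^ 2 + b₂ ^ 2 = N ^ 2)
    (ha₁ : 0 ≤ a₁) (hb₁ : 0 ≤ b₁) (ha₂ : 0 ≤ a₂) (hb₂ : 0 < b₂) {x₀ : E}
    (hx₀ : a₁ * ‖x₀‖ ≤ ⟪e, x₀⟫) :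
    closedBall x₀ (‖x₀‖ * (b₂ * a₁ - a₂ * b₁) / N ^ 2) ⊆ {x | a₂ * ‖x‖ ≤ ⟪e, x⟫} := by
  have hu : ‖N⁻¹ • e‖ = 1 := by
    rw [norm_smul, he, norm_inv, Real.norm_of_nonneg hN.le, inv_mul_cancel₀ hN.ne']
  have hinner (y : E) : ⟪N⁻¹ • e, y⟫ = ⟪e, y⟫ / N := by
    rw [real_inner_smul_left, inv_mul_eq_div]
  have hunit {a b : ℝ} (h : a ^ 2 + b ^ 2 = N ^ 2) : (a / N) ^ 2 + (b / N) ^ 2 = 1 := by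
    field_simp; exact h
  have hball := closedBall_subset_setOf_mul_norm_le_inner hu (hunit h₁) (hunit h₂)
    (by positivity) (by positivity) (by positivity) (by positivity) (x₀ := x₀)
    (by rwa [hinner, div_mul_eq_mul_div, div_le_div_iff_of_pos_right hN])
  intro x hx
  have hx' := hball (by convert hx using 2; field_simp)
  simp only [Set.mem_ofPred_eq, hinner] at hx' ⊢
  rwa [div_mul_eq_mul_div, div_le_div_iff_of_pos_right hN] at hx'

end CircularCone

theorem stmt_4 (n : ℕ) (e : EuclideanSpace ℝ (Fin n))
    (he : ‖e‖ = Real.sqrt n) (α β : ℝ)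
    (hβ0 : 0 < β) (hβα : β ≤ α) (hαn : α < Real.sqrt n)
    (sbar : EuclideanSpace ℝ (Fin n))
    (hs : (inner ℝ e sbar : ℝ) ≥ Real.sqrt ((n : ℝ) - β ^ 2) * ‖sbar‖) :
    Metric.closedBall sbar
        ((1 / (n : ℝ)) * ‖sbar‖ *
          (α * Real.sqrt ((n : ℝ) - β ^ 2) - β * Real.sqrt ((n : ℝ) - α ^ 2))) ⊆
      {x : EuclideanSpace ℝ (Fin n) |
        (inner ℝ e x : ℝ) ≥ Real.sqrt ((n : ℝ) - α ^ 2) * ‖x‖} := by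
  have hα0 : 0 < α := hβ0.trans_le hβα
  have hS : 0 < Real.sqrt n := hα0.trans hαn
  have hSsq : Real.sqrt n ^ 2 = n := Real.sq_sqrt (Nat.cast_nonneg n)
  have hpyth {γ : ℝ} (hγ0 : 0 ≤ γ) (hγ : γ < Real.sqrt n) :
      Real.sqrt ((n : ℝ) - γ ^ 2) ^ 2 + γ ^ 2 = Real.sqrt n ^ 2 := by
    have : γ ^ 2 ≤ n := hSsq ▸ pow_le_pow_left₀ hγ0 hγ.le 2
    rw [Real.sq_sqrt (by linarith), hSsq]; ring
  have hball := closedBall_subset_setOf_mul_norm_le_inner_of_norm_eq he hS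
    (hpyth hβ0.le (hβα.trans_lt hαn)) (hpyth hα0.le hαn) (Real.sqrt_nonneg _) hβ0.le
    (Real.sqrt_nonneg _) hα0 hs
  rw [hSsq] at hball
  refine (closedBall_subset_closedBall (le_of_eq ?_)).trans hball
  ring
end

section
/- Define the sequence α_{i+1} = α_i·√((1+α_i)/2) with 0 < α_0 < 1. If α_i ≤ 3/4 then α_i/α_{i+1} ≥ √(8/7), and if α_i ≥ 3/4 then (1 − α_{i+1})/(1 − α_i) ≥ 9/8. -/
theorem Real.sqrt_le_one_add_div_two {x : ℝ} (hx : 0 ≤ x) : √x ≤ (1 + x) / 2 :=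
  Real.sqrt_le_iff.2 ⟨by linarith, by nlinarith [sq_nonneg (1 - x)]⟩

theorem sqrt_eight_sevenths_le_div_mul_sqrt {α : ℝ} (h0 : 0 < α) (h : α ≤ 3 / 4) :
    √(8 / 7) ≤ α / (α * √((1 + α) / 2)) := by
  rw [div_mul_cancel_left₀ h0.ne', ← Real.sqrt_inv, inv_div]
  apply Real.sqrt_le_sqrt
  rw [le_div_iff₀ (by linarith)]
  linarith

/-- By AM-GM, `α √((1 + α) / 2) ≤ α (3 + α) / 4`, and `α (3 + α) / 4 ≤ (9 α - 1) / 8` is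
`(2 α - 1) (α - 1) ≤ 0`. -/
theorem nine_eighths_le_one_sub_mul_sqrt_div {α : ℝ} (h : 1 / 2 ≤ α) (h1 : α < 1) :
    9 / 8 ≤ (1 - α * √((1 + α) / 2)) / (1 - α) := by
  have hsqrt : √((1 + α) / 2) ≤ (3 + α) / 4 := by
    have := Real.sqrt_le_one_add_div_two (x := (1 + α) / 2) (by linarith)
    linarith
  have hstep : α * √((1 + α) / 2) ≤ (9 * α - 1) / 8 :=
    calc α * √((1 + α) / 2) ≤ α * ((3 + α) / 4) := by gcongr
      _ ≤ (9 * α - 1) / 8 := by nlinarith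
  rw [le_div_iff₀ (by linarith)]
  linarith

theorem stmt_7 (α : ℝ) (h0 : 0 < α) (h1 : α < 1) :
    (α ≤ 3 / 4 → α / (α * Real.sqrt ((1 + α) / 2)) ≥ Real.sqrt (8 / 7)) ∧
    (3 / 4 ≤ α →
      (1 - α * Real.sqrt ((1 + α) / 2)) / (1 - α) ≥ 9 / 8) :=
  ⟨sqrt_eight_sevenths_le_div_mul_sqrt h0,
    fun h => nine_eighths_le_one_sub_mul_sqrt_div (by linarith) h1⟩
end

section
/- Let E ∈ S^n be symmetric positive definite, 0 < α < 1, and let X ≠ 0 be a symmetric matrix with tr(E⁻¹X) = α·(tr((E⁻¹X)²))^{1/2}. Set S := (1/(n−α²))·(E⁻¹ − (α²/tr(E⁻¹X))·E⁻¹XE⁻¹). Then tr(ES) = 1 and tr(XS) = 0. -/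
/-!
With `A = E⁻¹`, `t = tr(AX)` and `q = tr((AX)²)`, both traces are linear in `S` and reduce to
`n - α² ≠ 0` and `t² = α² q`, once `t ≠ 0`. That holds because `q > 0`: factoring `A = yᴴ y` with
`y` invertible, `q` is the squared Frobenius norm of the nonzero Hermitian matrix `y X yᴴ`.
-/

open Matrix
open scoped ComplexOrder MatrixOrder

section

variable {𝕜 n : Type*} [RCLike 𝕜] [Fintype n] [DecidableEq n]

theorem Matrix.PosDef.trace_mul_mul_mul_pos {A X : Matrix n n 𝕜} (hA : A.PosDef)
    (hX : X.IsHermitian) (hX0 : X ≠ 0) : 0 < (A * X * (A * X)).trace := by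
  obtain ⟨y, hy, rfl⟩ :=
    CStarAlgebra.isStrictlyPositive_iff_eq_star_mul_self.mp hA.isStrictlyPositive
  set M := y * X * star y
  have hM : Mᴴ = M := isHermitian_mul_mul_conjTranspose y hX
  have hM0 : M ≠ 0 := by
    rwa [Ne, hy.star.mul_left_eq_zero, hy.mul_right_eq_zero]
  have htrace : (star y * y * X * (star y * y * X)).trace = (Mᴴ * M).trace := by
    rw [hM, Matrix.mul_assoc, Matrix.mul_assoc, trace_mul_comm]
    simp only [M, Matrix.mul_assoc]
  rw [htrace]
  exact (posSemidef_conjTranspose_mul_self M).trace_nonneg.lt_of_ne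
    (Ne.symm (trace_conjTranspose_mul_self_eq_zero_iff.not.mpr hM0))

end

theorem stmt_11_general (n : ℕ) (E X : Matrix (Fin n) (Fin n) ℝ)
    (hEpd : E.PosDef) (hXsym : X.IsSymm) (hX0 : X ≠ 0)
    (α : ℝ) (hα0 : 0 < α) (hα1 : α < 1)
    (hbdry : (E⁻¹ * X).trace =
      α * Real.sqrt ((E⁻¹ * X * (E⁻¹ * X)).trace))
    (S : Matrix (Fin n) (Fin n) ℝ)
    (hS : S = (1 / ((n : ℝ) - α ^ 2)) •
      (E⁻¹ - (α ^ 2 / (E⁻¹ * X).trace) • (E⁻¹ * X * E⁻¹))) :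
    (E * S).trace = 1 ∧ (X * S).trace = 0 := by
  set q := (E⁻¹ * X * (E⁻¹ * X)).trace
  set t := (E⁻¹ * X).trace
  have hq : 0 < q := hEpd.inv.trace_mul_mul_mul_pos hXsym hX0
  have ht : t ≠ 0 := by rw [hbdry]; positivity
  have ht_sq : t ^ 2 = α ^ 2 * q := by rw [hbdry, mul_pow, Real.sq_sqrt hq.le]
  have hn : (n : ℝ) - α ^ 2 ≠ 0 := by
    obtain _ | n := n
    · exact absurd (Subsingleton.elim X 0) hX0
    · push_cast; nlinarith
  have hE : E * E⁻¹ = 1 := E.mul_nonsing_inv ((isUnit_iff_isUnit_det E).mp hEpd.isUnit)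
  have htr_E : (E * (E⁻¹ * X * E⁻¹)).trace = t := by
    rw [Matrix.mul_assoc, ← Matrix.mul_assoc E, hE, Matrix.one_mul, trace_mul_comm]
  have htr_X : (X * (E⁻¹ * X * E⁻¹)).trace = q := by
    rw [trace_mul_comm, Matrix.mul_assoc (E⁻¹ * X)]
  subst hS
  simp only [Matrix.mul_smul, Matrix.mul_sub, trace_smul, trace_sub, htr_E, htr_X, hE, trace_one,
    Fintype.card_fin, trace_mul_comm X, smul_eq_mul]
  constructor
  · field_simp
  · field_simp
    linear_combination ht_sq

theorem stmt_11 (n : ℕ) (E X : Matrix (Fin n) (Fin n) ℝ)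
    (hEsym : E.IsSymm) (hEpd : E.PosDef) (hXsym : X.IsSymm) (hX0 : X ≠ 0)
    (α : ℝ) (hα0 : 0 < α) (hα1 : α < 1)
    (hbdry : (E⁻¹ * X).trace =
      α * Real.sqrt ((E⁻¹ * X * (E⁻¹ * X)).trace))
    (S : Matrix (Fin n) (Fin n) ℝ)
    (hS : S = (1 / ((n : ℝ) - α ^ 2)) •
      (E⁻¹ - (α ^ 2 / (E⁻¹ * X).trace) • (E⁻¹ * X * E⁻¹))) :
    (E * S).trace = 1 ∧ (X * S).trace = 0 :=
  stmt_11_general n E X hEpd hXsym hX0 α hα0 hα1 hbdry S hS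
end

section
/- Let E be an n×n symmetric positive definite matrix, 0 < α < 1, and X ≠ 0 a symmetric matrix on the boundary of K_E(α), i.e., tr(E⁻¹X) = α·tr((E⁻¹X)²)^{1/2}. With S := (1/(n−α²))·(E⁻¹ − (α²/tr(E⁻¹X))·E⁻¹XE⁻¹) and q(t) := tr(((E+tX)S)²), for every t with 0 < t ≤ α/‖X‖_E (where ‖X‖_E := tr((E⁻¹X)²)^{1/2}) one has q(t) < (1/(n−α²))·(1 − 2t·((1−α)/(n−α²))·‖X‖_E·(α − t‖X‖_E)). -/
/-!
Write `w = ‖X‖_E`, `β = n - α²`, `R = E^{1/2}` and `B = R⁻¹ X R⁻¹`, a symmetric matrix with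
`tr B = α w` and Frobenius norm `‖B‖_F = w`. Since `X E⁻¹ = R B R⁻¹`, the matrix `(E + tX) S` is
similar to `β⁻¹ (I + Q)` with `Q = a B + b B²`, `a = t - α/w`, `b = -tα/w`, so
`β² q(t) = n + 2 tr Q + ‖Q‖_F²`. Submultiplicativity of the Frobenius norm gives
`‖Q‖_F ≤ |a| w + |b| w²`, and for `t ≤ α/w` both `a, b ≤ 0`; with `s = t w` this yields
`β² q(t) ≤ n - 2α² + (α - s(1 - α))²`, which is below the claimed bound by `s²(1 - α²)`.
-/

open Matrix

section Frobenius

attribute [local instance] Matrix.frobeniusNormedAddCommGroup Matrix.frobeniusNormedSpace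

variable {n : Type*} [Fintype n]

lemma Matrix.IsSymm.trace_mul_self_eq_frobenius_norm_sq {B : Matrix n n ℝ} (hB : B.IsSymm) :
    (B * B).trace = ‖B‖ ^ 2 := by
  rw [frobenius_norm_def, ← Real.sqrt_eq_rpow, Real.sq_sqrt (by positivity)]
  simp only [trace, diag, mul_apply, Real.norm_eq_abs, Real.rpow_two, sq_abs]
  refine Finset.sum_congr rfl fun i _ => Finset.sum_congr rfl fun j _ => ?_
  rw [sq, hB.apply j i]

lemma Matrix.IsSymm.trace_mul_self_one_add_smul_add_smul_mul_self_le [DecidableEq n]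
    {B : Matrix n n ℝ} (hB : B.IsSymm) {w : ℝ} (hw0 : 0 ≤ w) (hw : (B * B).trace = w ^ 2)
    (a b : ℝ) :
    ((1 + a • B + b • (B * B)) * (1 + a • B + b • (B * B))).trace ≤
      Fintype.card n + 2 * a * B.trace + 2 * b * w ^ 2 + (|a| * w + |b| * w ^ 2) ^ 2 := by
  have hBB : (B * B).IsSymm := by simpa [hB.eq] using isSymm_transpose_mul_self B
  have hnormB : ‖B‖ = w := by
    rw [← sq_eq_sq₀ (norm_nonneg B) hw0, ← hB.trace_mul_self_eq_frobenius_norm_sq, hw]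
  set Q := a • B + b • (B * B) with hQ
  have hQnorm : ‖Q‖ ≤ |a| * w + |b| * w ^ 2 := calc
    ‖Q‖ ≤ ‖a • B‖ + ‖b • (B * B)‖ := norm_add_le _ _
    _ ≤ |a| * ‖B‖ + |b| * (‖B‖ * ‖B‖) := by
      rw [norm_smul, norm_smul, Real.norm_eq_abs, Real.norm_eq_abs]
      gcongr
      exact frobenius_norm_mul B B
    _ = |a| * w + |b| * w ^ 2 := by rw [hnormB, sq]
  have hexpand : ((1 + Q) * (1 + Q)).trace =
      Fintype.card n + 2 * a * B.trace + 2 * b * w ^ 2 + (Q * Q).trace := by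
    simp only [hQ, add_mul, mul_add, one_mul, mul_one, trace_add, trace_smul, trace_one, hw,
      smul_eq_mul]
    ring
  rw [add_assoc, hexpand, ((hB.smul a).add (hBB.smul b)).trace_mul_self_eq_frobenius_norm_sq]
  gcongr

end Frobenius

section Conjugation

variable {n K : Type*} [Fintype n] [DecidableEq n] [CommRing K]

lemma Matrix.add_smul_mul_sub_smul_inv_mul_mul_inv {E : Matrix n n K} (hE : IsUnit E)
    (X : Matrix n n K) (t c : K) :
    (E + t • X) * (E⁻¹ - c • (E⁻¹ * X * E⁻¹)) =
      1 + (t - c) • (X * E⁻¹) + (-(t * c)) • (X * E⁻¹ * (X * E⁻¹)) := by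
  have := hE.invertible
  simp only [mul_sub, add_mul, smul_mul_assoc, mul_smul_comm, ← mul_assoc, mul_inv_of_invertible,
    one_mul]
  module

lemma Matrix.one_add_smul_add_smul_mul_self_conj {R : Matrix n n K} (hR : IsUnit R)
    (B : Matrix n n K) (a b : K) :
    1 + a • (R * B * R⁻¹) + b • (R * B * R⁻¹ * (R * B * R⁻¹)) =
      R * (1 + a • B + b • (B * B)) * R⁻¹ := by
  have := hR.invertible
  simp [mul_add, add_mul, mul_assoc]

lemma Matrix.trace_conj_mul_conj {R : Matrix n n K} (hR : IsUnit R) (P : Matrix n n K) :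
    (R * P * R⁻¹ * (R * P * R⁻¹)).trace = (P * P).trace := by
  have := hR.invertible
  rw [← trace_conj hR (P * P)]
  simp [mul_assoc]

lemma Matrix.trace_mul_self_add_smul_mul_smul_sub_smul {E X R B : Matrix n n K}
    (hE : IsUnit E) (hR : IsUnit R) (hM : X * E⁻¹ = R * B * R⁻¹) (t c k : K) :
    ((E + t • X) * (k • (E⁻¹ - c • (E⁻¹ * X * E⁻¹))) *
        ((E + t • X) * (k • (E⁻¹ - c • (E⁻¹ * X * E⁻¹))))).trace =
      k ^ 2 * ((1 + (t - c) • B + (-(t * c)) • (B * B)) *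
        (1 + (t - c) • B + (-(t * c)) • (B * B))).trace := by
  rw [mul_smul_comm, add_smul_mul_sub_smul_inv_mul_mul_inv hE, hM,
    one_add_smul_add_smul_mul_self_conj hR, smul_mul_smul_comm, trace_smul,
    trace_conj_mul_conj hR, smul_eq_mul, sq]

open scoped MatrixOrder in
lemma Matrix.PosDef.exists_isSymm_conj_eq_mul_inv {E : Matrix n n ℝ} (hE : E.PosDef)
    {X : Matrix n n ℝ} (hX : X.IsSymm) :
    ∃ R B : Matrix n n ℝ, IsUnit R ∧ B.IsSymm ∧ X * E⁻¹ = R * B * R⁻¹ ∧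
      B.trace = (E⁻¹ * X).trace ∧ (B * B).trace = (E⁻¹ * X * (E⁻¹ * X)).trace := by
  obtain ⟨R, hRR, hR, hRsymm⟩ : ∃ R : Matrix n n ℝ, R * R = E ∧ IsUnit R ∧ R.IsSymm :=
    ⟨CFC.sqrt E, CFC.sqrt_mul_sqrt_self E hE.posSemidef.nonneg,
      CFC.isUnit_sqrt_iff_isStrictlyPositive.mpr hE.isStrictlyPositive,
      (CFC.sqrt_nonneg E).posSemidef.isHermitian⟩
  have := hR.invertible
  have hM : X * E⁻¹ = R * (R⁻¹ * X * R⁻¹) * R⁻¹ := by simp [← hRR, Matrix.mul_inv_rev, mul_assoc]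
  refine ⟨R, R⁻¹ * X * R⁻¹, hR, ?_, hM, ?_, ?_⟩
  · simp [IsSymm, transpose_mul, transpose_nonsing_inv, hRsymm.eq, hX.eq, mul_assoc]
  · rw [← trace_conj hR, ← hM, trace_mul_comm]
  · rw [← trace_conj_mul_conj hR, ← hM, mul_assoc, trace_mul_comm]
    simp only [mul_assoc]

end Conjugation

lemma Matrix.IsSymm.trace_mul_self_step_le_of_trace_eq {n : Type*} [Fintype n] [DecidableEq n]
    {B : Matrix n n ℝ} (hB : B.IsSymm) {α w t : ℝ} (hw0 : 0 < w) (htr : B.trace = α * w)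
    (hw : (B * B).trace = w ^ 2) (ht0 : 0 ≤ t) (ht : t ≤ α / w) :
    ((1 + (t - α / w) • B + (-(t * (α / w))) • (B * B)) *
        (1 + (t - α / w) • B + (-(t * (α / w))) • (B * B))).trace ≤
      Fintype.card n - 2 * α ^ 2 + (α - t * w * (1 - α)) ^ 2 := by
  have hα : 0 ≤ α / w := ht0.trans ht
  refine (hB.trace_mul_self_one_add_smul_add_smul_mul_self_le hw0.le hw _ _).trans_eq ?_
  rw [abs_of_nonpos (sub_nonpos.mpr ht), abs_of_nonpos (neg_nonpos.mpr (mul_nonneg ht0 hα)), htr]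
  field_simp
  ring

lemma sq_one_div_mul_lt_one_div_mul {ν α t w : ℝ} (hν : α ^ 2 < ν) (hα0 : 0 < α) (hα1 : α < 1)
    (ht0 : 0 < t) (hw0 : 0 < w) :
    (1 / (ν - α ^ 2)) ^ 2 * (ν - 2 * α ^ 2 + (α - t * w * (1 - α)) ^ 2) <
      1 / (ν - α ^ 2) * (1 - 2 * t * ((1 - α) / (ν - α ^ 2)) * w * (α - t * w)) := by
  have hβ : 0 < ν - α ^ 2 := sub_pos.mpr hν
  have hs : 0 < t * w := mul_pos ht0 hw0
  calc _ < (1 / (ν - α ^ 2)) ^ 2 * ((ν - α ^ 2) - 2 * (t * w) * (1 - α) * (α - t * w)) := by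
        gcongr
        nlinarith [mul_pos (mul_pos hs hs) (mul_pos (sub_pos.mpr hα1) (add_pos hα0 one_pos))]
    _ = _ := by field_simp

theorem stmt_12_general (n : ℕ) (E X : Matrix (Fin n) (Fin n) ℝ)
    (hEpd : E.PosDef) (hXsym : X.IsSymm)
    (α : ℝ) (hα0 : 0 < α) (hα1 : α < 1)
    (normXE : ℝ) (hnorm : normXE = Real.sqrt ((E⁻¹ * X * (E⁻¹ * X)).trace))
    (hbdry : (E⁻¹ * X).trace = α * normXE)
    (S : Matrix (Fin n) (Fin n) ℝ)
    (hS : S = (1 / ((n : ℝ) - α ^ 2)) •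
      (E⁻¹ - (α ^ 2 / (E⁻¹ * X).trace) • (E⁻¹ * X * E⁻¹)))
    (t : ℝ) (ht0 : 0 < t) (ht : t ≤ α / normXE) :
    (((E + t • X) * S) * ((E + t • X) * S)).trace <
      (1 / ((n : ℝ) - α ^ 2)) *
        (1 - 2 * t * ((1 - α) / ((n : ℝ) - α ^ 2)) * normXE * (α - t * normXE)) := by
  have hw0 : 0 < normXE := by
    by_contra! h
    exact (ht0.trans_le ht).not_ge (div_nonpos_iff.mpr (Or.inl ⟨hα0.le, h⟩))
  obtain ⟨R, B, hR, hB, hM, htrB, htrBB⟩ := hEpd.exists_isSymm_conj_eq_mul_inv hXsym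
  have hT : (E⁻¹ * X * (E⁻¹ * X)).trace = normXE ^ 2 := by
    rw [hnorm, Real.sq_sqrt (Real.sqrt_pos.mp (hnorm ▸ hw0)).le]
  rw [hbdry] at htrB
  rw [hT] at htrBB
  have hn : α ^ 2 < n := by
    rcases n.eq_zero_or_pos with rfl | hn
    · simp only [trace, Finset.univ_eq_empty, Finset.sum_empty] at htrBB
      nlinarith
    · nlinarith [show (1 : ℝ) ≤ n by exact_mod_cast hn]
  have hc : α ^ 2 / (E⁻¹ * X).trace = α / normXE := by
    rw [hbdry, sq, mul_div_mul_left _ _ hα0.ne']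
  rw [hS, hc, trace_mul_self_add_smul_mul_smul_sub_smul hEpd.isUnit hR hM]
  calc _ ≤ (1 / ((n : ℝ) - α ^ 2)) ^ 2 * (n - 2 * α ^ 2 + (α - t * normXE * (1 - α)) ^ 2) := by
        gcongr
        simpa only [Fintype.card_fin] using hB.trace_mul_self_step_le_of_trace_eq hw0 htrB htrBB ht0.le ht
    _ < _ := sq_one_div_mul_lt_one_div_mul hn hα0 hα1 ht0 hw0

theorem stmt_12 (n : ℕ) (E X : Matrix (Fin n) (Fin n) ℝ)
    (hEsym : E.IsSymm) (hEpd : E.PosDef) (hXsym : X.IsSymm) (hX0 : X ≠ 0)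
    (α : ℝ) (hα0 : 0 < α) (hα1 : α < 1)
    (normXE : ℝ) (hnorm : normXE = Real.sqrt ((E⁻¹ * X * (E⁻¹ * X)).trace))
    (hbdry : (E⁻¹ * X).trace = α * normXE)
    (S : Matrix (Fin n) (Fin n) ℝ)
    (hS : S = (1 / ((n : ℝ) - α ^ 2)) •
      (E⁻¹ - (α ^ 2 / (E⁻¹ * X).trace) • (E⁻¹ * X * E⁻¹)))
    (t : ℝ) (ht0 : 0 < t) (ht : t ≤ α / normXE) :
    (((E + t • X) * S) * ((E + t • X) * S)).trace <
      (1 / ((n : ℝ) - α ^ 2)) *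
        (1 - 2 * t * ((1 - α) / ((n : ℝ) - α ^ 2)) * normXE * (α - t * normXE)) :=
  stmt_12_general n E X hEpd hXsym α hα0 hα1 normXE hnorm hbdry S hS t ht0 ht
end

section
/- Let e ∈ ℝ^n with ‖e‖ = √n, and let x ∈ ℝ^n satisfy eᵀx ≥ √(n−1)·‖x‖ with x ≠ 0. Then the point x̄ := (eᵀx/‖x‖²)·x satisfies ‖x̄ − e‖ ≤ 1. In particular, x̄ lies in the closed unit ball centered at e, and hence the cone K_e(√(n−1)) is contained in the cone generated by the closed unit ball around e. -/
/-!
The point `x̄ = (⟪e, x⟫ / ‖x‖²) • x` is the orthogonal projection of `e` onto the line `ℝ x`, so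
Pythagoras gives `‖x̄ - e‖² = ‖e‖² - ⟪e, x⟫² / ‖x‖²`; the cone condition bounds the subtracted term
below by `n - 1`, whence `‖x̄ - e‖² ≤ n - (n - 1) = 1`. On the cone minus the origin `⟪e, x⟫ > 0`
(for `n ≥ 2` because `√(n - 1) > 0`, for `n = 1` because on a line only `0` is orthogonal to
`e ≠ 0`), so `x` is a positive multiple of `x̄`, which gives the inclusion of cones.
-/

open RealInnerProductSpace

section InnerProductSpace

variable {E : Type*} [NormedAddCommGroup E] [InnerProductSpace ℝ E]

theorem norm_inner_div_sq_smul_sub_sq (e : E) {x : E} (hx : x ≠ 0) :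
    ‖(⟪e, x⟫ / ‖x‖ ^ 2) • x - e‖ ^ 2 = ‖e‖ ^ 2 - ⟪e, x⟫ ^ 2 / ‖x‖ ^ 2 := by
  have hx2 : ‖x‖ ^ 2 ≠ 0 := by positivity
  rw [norm_sub_sq_real, norm_smul, real_inner_smul_left, real_inner_comm, Real.norm_eq_abs,
    mul_pow, sq_abs]
  field_simp
  ring

theorem norm_inner_div_sq_smul_sub_sq_le {e x : E} {γ : ℝ} (hγ : 0 ≤ γ) (hx : x ≠ 0)
    (h : γ * ‖x‖ ≤ ⟪e, x⟫) :
    ‖(⟪e, x⟫ / ‖x‖ ^ 2) • x - e‖ ^ 2 ≤ ‖e‖ ^ 2 - γ ^ 2 := by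
  have hx' : 0 < ‖x‖ := norm_pos_iff.mpr hx
  have hsq : (γ * ‖x‖) ^ 2 ≤ ⟪e, x⟫ ^ 2 := pow_le_pow_left₀ (by positivity) h 2
  have : γ ^ 2 ≤ ⟪e, x⟫ ^ 2 / ‖x‖ ^ 2 := by
    rw [le_div_iff₀ (by positivity)]
    linarith
  rw [norm_inner_div_sq_smul_sub_sq e hx]
  linarith

end InnerProductSpace

theorem EuclideanSpace.inner_eq_zero_fin_one {e x : EuclideanSpace ℝ (Fin 1)} :
    ⟪e, x⟫ = 0 ↔ e = 0 ∨ x = 0 := by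
  have hinner : ⟪e, x⟫ = e 0 * x 0 := by
    simp [PiLp.inner_apply, mul_comm]
  have hzero (v : EuclideanSpace ℝ (Fin 1)) : v = 0 ↔ v 0 = 0 := by
    refine ⟨fun hv => hv ▸ rfl, fun hv => ?_⟩
    ext i
    rwa [Subsingleton.elim i 0]
  rw [hinner, hzero e, hzero x, mul_eq_zero]

theorem inner_pos_of_sqrt_sub_one_mul_norm_le {n : ℕ} {e x : EuclideanSpace ℝ (Fin n)}
    (he : ‖e‖ = √n) (hx : x ≠ 0) (h : √((n : ℝ) - 1) * ‖x‖ ≤ ⟪e, x⟫) : 0 < ⟪e, x⟫ := by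
  have hx' : 0 < ‖x‖ := norm_pos_iff.mpr hx
  refine (le_trans (by positivity) h).lt_of_ne fun h0 => ?_
  have hγ : √((n : ℝ) - 1) = 0 :=
    le_antisymm (nonpos_of_mul_nonpos_left (h0 ▸ h) hx') (Real.sqrt_nonneg _)
  have hn : n ≤ 1 := by
    have := Real.sqrt_eq_zero'.mp hγ
    exact_mod_cast (by linarith : (n : ℝ) ≤ 1)
  interval_cases n
  · exact hx (Subsingleton.elim _ _)
  · have he0 : e ≠ 0 := by
      rintro rfl
      norm_num at he
    exact (EuclideanSpace.inner_eq_zero_fin_one.mp h0.symm).elim he0 hx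

theorem stmt_15 (n : ℕ) (e : EuclideanSpace ℝ (Fin n))
    (he : ‖e‖ = Real.sqrt n) :
    (∀ x : EuclideanSpace ℝ (Fin n), x ≠ 0 →
      (inner ℝ e x : ℝ) ≥ Real.sqrt ((n : ℝ) - 1) * ‖x‖ →
      ‖(((inner ℝ e x : ℝ) / ‖x‖ ^ 2) • x) - e‖ ≤ 1) ∧
    {x : EuclideanSpace ℝ (Fin n) |
        (inner ℝ e x : ℝ) ≥ Real.sqrt ((n : ℝ) - 1) * ‖x‖} ⊆
      {y : EuclideanSpace ℝ (Fin n) |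
        ∃ t : ℝ, 0 ≤ t ∧ ∃ z ∈ Metric.closedBall e 1, y = t • z} := by
  have hproj : ∀ x : EuclideanSpace ℝ (Fin n), x ≠ 0 → √((n : ℝ) - 1) * ‖x‖ ≤ ⟪e, x⟫ →
      ‖(⟪e, x⟫ / ‖x‖ ^ 2) • x - e‖ ≤ 1 := by
    intro x hx h
    have hsq := norm_inner_div_sq_smul_sub_sq_le (Real.sqrt_nonneg _) hx h
    rw [he, Real.sq_sqrt (Nat.cast_nonneg n), Real.sq_sqrt'] at hsq
    exact (sq_le_one_iff₀ (norm_nonneg _)).mp (by linarith [le_max_left ((n : ℝ) - 1) 0])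
  refine ⟨hproj, fun x h => ?_⟩
  replace h : √((n : ℝ) - 1) * ‖x‖ ≤ ⟪e, x⟫ := h
  by_cases hx : x = 0
  · exact ⟨0, le_rfl, e, Metric.mem_closedBall_self zero_le_one, by simp [hx]⟩
  have ha := inner_pos_of_sqrt_sub_one_mul_norm_le he hx h
  have hx2 : ‖x‖ ^ 2 ≠ 0 := by positivity
  refine ⟨‖x‖ ^ 2 / ⟪e, x⟫, by positivity, (⟪e, x⟫ / ‖x‖ ^ 2) • x, ?_, ?_⟩
  · rw [Metric.mem_closedBall, dist_eq_norm]
    exact hproj x hx h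
  · rw [smul_smul, div_mul_div_cancel₀ ha.ne', div_self hx2, one_smul]
end
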